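/- On the unit circle parametrization of the highest weight spherical harmonics: for the functions e_n(x₁,x₂,x') = (x₁+ix₂)^n on 𝕊², the ratio ‖e_p · e_q‖_{L²(𝕊²)} / (‖e_p‖_{L²(𝕊²)} ‖e_q‖_{L²(𝕊²)}) is bounded below by c·min(p,q)^{1/4} for some absolute constant c > 0 and all integers p, q ≥ 1. -/

import Mathlib

/-!
Let `S_n = ∫_{𝕊²} (x₁² + x₂²)^n dσ = ‖e_n‖²`, so that `‖e_p e_q‖² = S_{p+q}`. Integrating the
`2n`-homogeneous polynomial `(x₁² + x₂²)^n` against `e^{-|x|²}` once in polar coordinates and once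
by Fubini over `ℝ³ ≅ ℝ × ℂ` gives `S_n = 2 π^{3/2} n! / Γ(n + 3/2)`. Log-convexity of `Γ` turns
this into `4π³/(n + 1) ≤ S_n² ≤ 4π³/(n + 1/2)`, and the claim reduces to
`min(p, q) (p + q + 1) ≤ 2 (p + 1/2)(q + 1/2)`.
-/

open MeasureTheory Complex Set Metric Real
open scoped Nat

local notation "ℝ³" => EuclideanSpace ℝ (Fin 3)

theorem integral_volumeIoiPow (n : ℕ) (f : ℝ → ℝ) :
    ∫ r, f r.1 ∂Measure.volumeIoiPow n = ∫ r in Ioi (0 : ℝ), r ^ n * f r := by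
  simp only [Measure.volumeIoiPow, ENNReal.ofReal]
  rw [integral_withDensity_eq_integral_smul
      ((measurable_subtype_coe.pow_const _).real_toNNReal),
    integral_subtype_comap measurableSet_Ioi fun r ↦ Real.toNNReal (r ^ n) • f r]
  refine setIntegral_congr_fun measurableSet_Ioi fun r hr ↦ ?_
  rw [NNReal.smul_def, Real.coe_toNNReal _ (pow_nonneg (le_of_lt hr) _), smul_eq_mul]

section Polar

variable {E : Type*} [NormedAddCommGroup E] [NormedSpace ℝ E] [FiniteDimensional ℝ E]
  [Nontrivial E] [MeasurableSpace E] [BorelSpace E] (μ : Measure E) [μ.IsAddHaarMeasure]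

theorem integral_mul_fun_norm_of_homogeneous {h : E → ℝ} {k : ℕ}
    (hh : ∀ (r : ℝ) (x : E), 0 < r → h (r • x) = r ^ k * h x) (f : ℝ → ℝ) :
    ∫ x, h x * f ‖x‖ ∂μ =
      (∫ y, h y ∂μ.toSphere) * ∫ r in Ioi (0 : ℝ), r ^ (k + Module.finrank ℝ E - 1) * f r :=
  calc ∫ x, h x * f ‖x‖ ∂μ = ∫ x : ({(0)}ᶜ : Set E), h x * f ‖x.1‖ ∂μ.comap (↑) := by
        rw [integral_subtype_comap (measurableSet_singleton _).compl fun x ↦ h x * f ‖x‖,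
          restrict_compl_singleton]
    _ = ∫ p : sphere (0 : E) 1 × Ioi (0 : ℝ), h p.1 * (p.2.1 ^ k * f p.2.1)
          ∂μ.toSphere.prod (.volumeIoiPow (Module.finrank ℝ E - 1)) := by
        rw [← μ.measurePreserving_homeomorphUnitSphereProd.integral_comp
          (Homeomorph.measurableEmbedding _)]
        refine integral_congr_ae (Filter.Eventually.of_forall fun x ↦ ?_)
        have hx : 0 < ‖x.1‖ := norm_pos_iff.2 x.2
        have hhx : h x = ‖x.1‖ ^ k * h (‖x.1‖⁻¹ • x.1) := by
          simpa only [smul_inv_smul₀ hx.ne'] using hh ‖x.1‖ (‖x.1‖⁻¹ • x.1) hx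
        simp only [homeomorphUnitSphereProd_apply_fst_coe,
          homeomorphUnitSphereProd_apply_snd_coe, hhx]
        ring
    _ = (∫ y, h y ∂μ.toSphere) *
          ∫ r, r.1 ^ k * f r.1 ∂.volumeIoiPow (Module.finrank ℝ E - 1) :=
        integral_prod_mul (fun y : sphere (0 : E) 1 ↦ h y)
          fun r : Ioi (0 : ℝ) ↦ r.1 ^ k * f r.1
    _ = _ := by
        rw [integral_volumeIoiPow _ fun r ↦ r ^ k * f r]
        congr 1
        refine setIntegral_congr_fun measurableSet_Ioi fun r _ ↦ ?_
        rw [Nat.add_sub_assoc Module.finrank_pos, pow_add]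
        ring

end Polar

theorem integral_Ioi_pow_mul_exp_neg_sq (m : ℕ) :
    ∫ r in Ioi (0 : ℝ), r ^ m * rexp (-r ^ 2) = Real.Gamma ((m + 1) / 2) / 2 := by
  rw [div_eq_inv_mul, ← one_div,
    ← integral_rpow_mul_exp_neg_rpow two_pos (by linarith [m.cast_nonneg (α := ℝ)])]
  refine setIntegral_congr_fun measurableSet_Ioi fun r _ ↦ ?_
  norm_cast

theorem Complex.integral_norm_sq_pow_mul_exp_neg_norm_sq (n : ℕ) :
    ∫ z : ℂ, (‖z‖ ^ 2) ^ n * rexp (-‖z‖ ^ 2) = π * n ! := by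
  have h := Complex.integral_rpow_mul_exp_neg_rpow one_le_two
    (by linarith [n.cast_nonneg (α := ℝ)] : (-2 : ℝ) < 2 * n)
  rw [show ((2 : ℝ) * n + 2) / 2 = n + 1 by ring, Real.Gamma_nat_eq_factorial,
    mul_div_cancel_left₀ π two_ne_zero] at h
  rw [← h]
  congr with z
  norm_cast
  rw [pow_mul]

open EuclideanSpace in
theorem integral_euclideanSpace_fin_three_eq_integral_prod {G : Type*} [NormedAddCommGroup G]
    [NormedSpace ℝ G] (F : ℝ × ℂ → G) :
    ∫ x : ℝ³, F (x 2, x 0 + x 1 * I) = ∫ p, F p := by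
  let Φ : ℝ³ ≃ᵐ ℝ × ℂ :=
    (MeasurableEquiv.toLp 2 (Fin 3 → ℝ)).symm.trans <|
      (MeasurableEquiv.piFinSuccAbove (fun _ ↦ ℝ) 2).trans <|
        (MeasurableEquiv.refl ℝ).prodCongr measurableEquivPi.symm
  have hΦ : MeasurePreserving Φ :=
    ((MeasurePreserving.id volume).prod volume_preserving_equiv_pi.symm).comp <|
      (measurePreserving_piFinSuccAbove (fun _ : Fin 3 ↦ (volume : Measure ℝ)) 2).comp
        (volume_preserving_symm_measurableEquiv_toLp (Fin 3))
  exact hΦ.integral_comp' F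

theorem integral_planar_pow_mul_exp_neg_norm_sq (n : ℕ) :
    ∫ x : ℝ³, (x 0 ^ 2 + x 1 ^ 2) ^ n * rexp (-‖x‖ ^ 2) = √π * (π * n !) :=
  calc _ = ∫ p : ℝ × ℂ, rexp (-p.1 ^ 2) * ((‖p.2‖ ^ 2) ^ n * rexp (-‖p.2‖ ^ 2)) := by
        rw [← integral_euclideanSpace_fin_three_eq_integral_prod]
        congr with x
        rw [EuclideanSpace.norm_sq_eq, Fin.sum_univ_three, Complex.sq_norm, normSq_add_mul_I]
        simp only [Real.norm_eq_abs, sq_abs]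
        rw [mul_left_comm, ← Real.exp_add]
        ring_nf
    _ = (∫ t : ℝ, rexp (-t ^ 2)) * ∫ z : ℂ, (‖z‖ ^ 2) ^ n * rexp (-‖z‖ ^ 2) :=
        integral_prod_mul (fun t : ℝ ↦ rexp (-t ^ 2))
          fun z : ℂ ↦ (‖z‖ ^ 2) ^ n * rexp (-‖z‖ ^ 2)
    _ = √π * (π * n !) := by
        rw [Complex.integral_norm_sq_pow_mul_exp_neg_norm_sq]
        congr 1
        simpa using integral_gaussian 1

theorem Real.Gamma_add_half_sq_le {s : ℝ} (hs : 0 < s) :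
    Real.Gamma (s + 1 / 2) ^ 2 ≤ s * Real.Gamma s ^ 2 := by
  have hΓ := Real.Gamma_pos_of_pos hs
  have h := Real.Gamma_mul_add_mul_le_rpow_Gamma_mul_rpow_Gamma hs (by linarith : 0 < s + 1)
    (by norm_num : (0 : ℝ) < 1 / 2) (by norm_num : (0 : ℝ) < 1 / 2) (by norm_num)
  rw [← sqrt_eq_rpow, ← sqrt_eq_rpow, ← sqrt_mul hΓ.le, Real.Gamma_add_one hs.ne'] at h
  calc Real.Gamma (s + 1 / 2) ^ 2 = Real.Gamma (1 / 2 * s + 1 / 2 * (s + 1)) ^ 2 := by ring_nf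
    _ ≤ √(Real.Gamma s * (s * Real.Gamma s)) ^ 2 :=
        pow_le_pow_left₀ (Real.Gamma_pos_of_pos (by positivity)).le h 2
    _ = s * Real.Gamma s ^ 2 := by rw [sq_sqrt (by positivity)]; ring

theorem factorial_sq_mul_le_Gamma_sq (n : ℕ) :
    (n ! : ℝ) ^ 2 * ((n : ℝ) + 1 / 2) ≤ Real.Gamma (n + 3 / 2) ^ 2 := by
  have h := Real.Gamma_add_half_sq_le (by positivity : (0 : ℝ) < n + 1 / 2)
  have hΓ : Real.Gamma (n + 3 / 2) = (n + 1 / 2) * Real.Gamma (n + 1 / 2) := by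
    rw [← Real.Gamma_add_one (by positivity)]; ring_nf
  rw [show (n : ℝ) + 1 / 2 + 1 / 2 = n + 1 by ring, Real.Gamma_nat_eq_factorial] at h
  rw [hΓ]
  nlinarith [h]

theorem Gamma_sq_le_factorial_sq_mul (n : ℕ) :
    Real.Gamma (n + 3 / 2) ^ 2 ≤ (n ! : ℝ) ^ 2 * (n + 1) := by
  have h := Real.Gamma_add_half_sq_le (by positivity : (0 : ℝ) < n + 1)
  rw [Real.Gamma_nat_eq_factorial, show (n : ℝ) + 1 + 1 / 2 = n + 3 / 2 by ring] at h
  linarith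

noncomputable def sphereMoment (n : ℕ) : ℝ :=
  ∫ x : sphere (0 : ℝ³) 1, ((x : ℝ³) 0 ^ 2 + (x : ℝ³) 1 ^ 2) ^ n ∂volume.toSphere

theorem sphereMoment_nonneg (n : ℕ) : 0 ≤ sphereMoment n :=
  integral_nonneg fun _ ↦ by positivity

theorem sphereMoment_eq (n : ℕ) :
    sphereMoment n = 2 * √π * π * n ! / Real.Gamma (n + 3 / 2) := by
  have hpolar := integral_mul_fun_norm_of_homogeneous volume
    (h := fun x : ℝ³ ↦ (x 0 ^ 2 + x 1 ^ 2) ^ n) (k := 2 * n)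
    (fun r x _ ↦ by simp only [PiLp.smul_apply, smul_eq_mul]; rw [pow_mul, ← mul_pow]; ring)
    fun r ↦ rexp (-r ^ 2)
  rw [integral_planar_pow_mul_exp_neg_norm_sq, integral_Ioi_pow_mul_exp_neg_sq,
    finrank_euclideanSpace_fin,
    show (((2 * n + 3 - 1 : ℕ) : ℝ) + 1) / 2 = n + 3 / 2 by push_cast [Nat.add_sub_assoc]; ring]
    at hpolar
  rw [sphereMoment, eq_div_iff (Real.Gamma_pos_of_pos (by positivity)).ne']
  linarith

theorem sq_sphereMoment (n : ℕ) :
    sphereMoment n ^ 2 = 4 * π ^ 3 * (n ! : ℝ) ^ 2 / Real.Gamma (n + 3 / 2) ^ 2 := by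
  rw [sphereMoment_eq, div_pow]
  congr 1
  rw [mul_pow, mul_pow, mul_pow, sq_sqrt pi_nonneg]
  ring

theorem sq_sphereMoment_le (n : ℕ) : sphereMoment n ^ 2 ≤ 4 * π ^ 3 / (n + 1 / 2) := by
  have hΓ := Real.Gamma_pos_of_pos (by positivity : (0 : ℝ) < n + 3 / 2)
  rw [sq_sphereMoment, div_le_div_iff₀ (by positivity) (by positivity)]
  have := mul_le_mul_of_nonneg_left (factorial_sq_mul_le_Gamma_sq n)
    (by positivity : (0 : ℝ) ≤ 4 * π ^ 3)
  linarith

theorem le_sq_sphereMoment (n : ℕ) : 4 * π ^ 3 / (n + 1) ≤ sphereMoment n ^ 2 := by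
  have hΓ := Real.Gamma_pos_of_pos (by positivity : (0 : ℝ) < n + 3 / 2)
  rw [sq_sphereMoment, div_le_div_iff₀ (by positivity) (by positivity)]
  have := mul_le_mul_of_nonneg_left (Gamma_sq_le_factorial_sq_mul n)
    (by positivity : (0 : ℝ) ≤ 4 * π ^ 3)
  linarith

theorem min_mul_add_add_one_le {p q : ℝ} (hp : 0 ≤ p) (hq : 0 ≤ q) :
    min p q * (p + q + 1) ≤ 2 * ((p + 1 / 2) * (q + 1 / 2)) := by
  rcases le_total p q with h | h
  · rw [min_eq_left h]; nlinarith
  · rw [min_eq_right h]; nlinarith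

theorem min_mul_sq_sphereMoment_mul_le (p q : ℕ) :
    min (p : ℝ) q * (sphereMoment p * sphereMoment q) ^ 2 ≤
      8 * π ^ 3 * sphereMoment (p + q) ^ 2 := by
  have hA : 0 ≤ 4 * π ^ 3 := by positivity
  have hm : 0 ≤ min (p : ℝ) q := le_min p.cast_nonneg q.cast_nonneg
  calc min (p : ℝ) q * (sphereMoment p * sphereMoment q) ^ 2
      = min (p : ℝ) q * sphereMoment p ^ 2 * sphereMoment q ^ 2 := by ring
    _ ≤ min (p : ℝ) q * (4 * π ^ 3 / (p + 1 / 2)) * (4 * π ^ 3 / (q + 1 / 2)) := by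
        gcongr
        exacts [sq_sphereMoment_le p, sq_sphereMoment_le q]
    _ = (4 * π ^ 3) ^ 2 * (min (p : ℝ) q / ((p + 1 / 2) * (q + 1 / 2))) := by
        field_simp
    _ ≤ (4 * π ^ 3) ^ 2 * (2 / (p + q + 1)) := by
        refine mul_le_mul_of_nonneg_left ?_ (by positivity)
        rw [div_le_div_iff₀ (by positivity) (by positivity)]
        exact min_mul_add_add_one_le p.cast_nonneg q.cast_nonneg
    _ = 8 * π ^ 3 * (4 * π ^ 3 / ((p + q : ℕ) + 1)) := by push_cast; ring
    _ ≤ 8 * π ^ 3 * sphereMoment (p + q) ^ 2 := by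
        gcongr
        exact le_sq_sphereMoment (p + q)

theorem quarter_rpow_le_of_mul_sq_le {m a b d C : ℝ} (hm : 0 ≤ m) (ha : 0 ≤ a) (hb : 0 ≤ b)
    (hd : 0 ≤ d) (hC : 0 < C) (h : m * (a * b) ^ 2 ≤ C * d ^ 2) :
    C⁻¹ ^ (1 / 4 : ℝ) * m ^ (1 / 4 : ℝ) * (a ^ (1 / 2 : ℝ) * b ^ (1 / 2 : ℝ)) ≤
      d ^ (1 / 2 : ℝ) := by
  refine le_of_pow_le_pow_left₀ four_ne_zero (by positivity) ?_
  simp only [mul_pow, ← rpow_natCast, ← rpow_mul (inv_nonneg.2 hC.le), ← rpow_mul hm,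
    ← rpow_mul ha, ← rpow_mul hb, ← rpow_mul hd]
  norm_num
  rw [mul_assoc, inv_mul_le_iff₀ hC]
  nlinarith [h]

theorem norm_add_I_mul_pow_sq (a b : ℝ) (n : ℕ) :
    ‖((a : ℂ) + I * b) ^ n‖ ^ 2 = (a ^ 2 + b ^ 2) ^ n := by
  rw [norm_pow, ← pow_mul, mul_comm n 2, pow_mul, mul_comm I, Complex.sq_norm,
    normSq_add_mul_I]

/-- Optimality of the bilinear estimate on `𝕊²`: for the highest weight spherical harmonics
`e_n(x₁,x₂,x₃) = (x₁ + i x₂)^n` on the unit sphere `𝕊² ⊂ ℝ³` (with its surface measure),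
one has `‖e_p e_q‖_{L²} ≥ c min(p,q)^{1/4} ‖e_p‖_{L²} ‖e_q‖_{L²}` for all `p, q ≥ 1`. -/
theorem stmt_4
    (e : ℕ → Metric.sphere (0 : EuclideanSpace ℝ (Fin 3)) 1 → ℂ)
    (he : ∀ n x, e n x = (((x : EuclideanSpace ℝ (Fin 3)) 0 : ℂ) +
        Complex.I * ((x : EuclideanSpace ℝ (Fin 3)) 1 : ℂ)) ^ n) :
    ∃ c : ℝ, 0 < c ∧ ∀ p q : ℕ, 1 ≤ p → 1 ≤ q →
      c * (min p q : ℝ) ^ (1 / 4 : ℝ) *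
          ((∫ x, ‖e p x‖ ^ 2 ∂(volume : Measure (EuclideanSpace ℝ (Fin 3))).toSphere) ^
            (1 / 2 : ℝ) *
           (∫ x, ‖e q x‖ ^ 2 ∂(volume : Measure (EuclideanSpace ℝ (Fin 3))).toSphere) ^
            (1 / 2 : ℝ)) ≤
        (∫ x, ‖e p x * e q x‖ ^ 2 ∂(volume : Measure (EuclideanSpace ℝ (Fin 3))).toSphere) ^
          (1 / 2 : ℝ) := by
  have hL2 (n : ℕ) : ∫ x, ‖e n x‖ ^ 2 ∂(volume : Measure ℝ³).toSphere = sphereMoment n := by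
    simp only [he, norm_add_I_mul_pow_sq, sphereMoment]
  have hL2_mul (p q : ℕ) :
      ∫ x, ‖e p x * e q x‖ ^ 2 ∂(volume : Measure ℝ³).toSphere = sphereMoment (p + q) := by
    simp only [he, ← pow_add, norm_add_I_mul_pow_sq, sphereMoment]
  refine ⟨(8 * π ^ 3)⁻¹ ^ (1 / 4 : ℝ), by positivity, fun p q _ _ ↦ ?_⟩
  rw [hL2, hL2, hL2_mul]
  exact quarter_rpow_le_of_mul_sq_le (le_min p.cast_nonneg q.cast_nonneg) (sphereMoment_nonneg p)
    (sphereMoment_nonneg q) (sphereMoment_nonneg _) (by positivity)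
    (min_mul_sq_sphereMoment_mul_le p q)
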